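/- Stationarity of the padded points (first part of the transition-state construction theorem): if (β⋆,γ⋆) ∈ ℝ^p × ℝ^p is a critical point of E_p (i.e., the gradient of E_p vanishes at (β⋆,γ⋆)), then for every i with 1 ≤ i ≤ p+1 the padded point Γ^{p+1}(i,i), and for every i with 1 ≤ i ≤ p the padded point Γ^{p+1}(i,i+1), is a critical point of E_{p+1}. -/

import Mathlib

open Matrix Complex

noncomputable section

/-- Computational basis index set for `n` qubits, identified with `Fin 2 ^ n` via binary digits. -/
abbrev QIdx (n : ℕ) := Fin n → Fin 2

/-- The Pauli X matrix. -/
def pauliX : Matrix (Fin 2) (Fin 2) ℂ := !![0, 1; 1, 0]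

/-- The Pauli Z matrix. -/
def pauliZ : Matrix (Fin 2) (Fin 2) ℂ := !![1, 0; 0, -1]

/-- The `n`-fold Kronecker product with `M` in the `i`-th tensor factor and the 2×2 identity in
every other factor, realized as a matrix on `ℂ^(2^n)` with indices `Fin n → Fin 2`. -/
def pauliAt {n : ℕ} (M : Matrix (Fin 2) (Fin 2) ℂ) (i : Fin n) :
    Matrix (QIdx n) (QIdx n) ℂ :=
  Matrix.of fun s t => ∏ j, if j = i then M (s j) (t j) else if s j = t j then 1 else 0

/-- `σ^x_i`. -/
def sigmaX {n : ℕ} (i : Fin n) : Matrix (QIdx n) (QIdx n) ℂ := pauliAt pauliX i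

/-- `σ^z_i`. -/
def sigmaZ {n : ℕ} (i : Fin n) : Matrix (QIdx n) (QIdx n) ℂ := pauliAt pauliZ i

lemma sigmaZ_eq_diagonal {n : ℕ} (i : Fin n) :
    sigmaZ i = Matrix.diagonal (fun s => pauliZ (s i) (s i)) := by
  ext s t
  simp only [sigmaZ, pauliAt, Matrix.of_apply, Matrix.diagonal_apply]
  by_cases h : s = t
  · subst h
    simp [Finset.prod_ite_eq']
  · rw [if_neg h]
    obtain ⟨j₀, hj₀⟩ := Function.ne_iff.mp h
    refine Finset.prod_eq_zero (Finset.mem_univ j₀) ?_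
    by_cases hji : j₀ = i
    · subst hji
      rw [if_pos rfl]
      have hz : ∀ a b : Fin 2, a ≠ b → pauliZ a b = 0 := by
        intro a b hab
        fin_cases a <;> fin_cases b <;> simp_all [pauliZ]
      exact hz _ _ hj₀
    · rw [if_neg hji, if_neg hj₀]

lemma sigmaZ_mul_comm {n : ℕ} (i j : Fin n) : sigmaZ i * sigmaZ j = sigmaZ j * sigmaZ i := by
  rw [sigmaZ_eq_diagonal, sigmaZ_eq_diagonal, Matrix.diagonal_mul_diagonal,
    Matrix.diagonal_mul_diagonal]
  ext s
  simp [mul_comm]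

/-- The MaxCut Hamiltonian `H_C = Σ_{{i,j} ∈ E} σ^z_i σ^z_j`. -/
def hamC (n : ℕ) (G : SimpleGraph (Fin n)) [DecidableRel G.Adj] :
    Matrix (QIdx n) (QIdx n) ℂ :=
  ∑ e ∈ G.edgeFinset,
    Sym2.lift ⟨fun i j => sigmaZ i * sigmaZ j, fun i j => sigmaZ_mul_comm i j⟩ e

/-- The mixing Hamiltonian `H_B = -Σ_i σ^x_i`. -/
def hamB (n : ℕ) : Matrix (QIdx n) (QIdx n) ℂ := -(∑ i : Fin n, sigmaX i)

/-- `U_B(β) = exp(-i β H_B)`. -/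
def uB (n : ℕ) (β : ℝ) : Matrix (QIdx n) (QIdx n) ℂ :=
  NormedSpace.exp ((-(Complex.I) * (β : ℂ)) • hamB n)

/-- `U_C(γ) = exp(-i γ H_C)`. -/
def uC (n : ℕ) (G : SimpleGraph (Fin n)) [DecidableRel G.Adj] (γ : ℝ) :
    Matrix (QIdx n) (QIdx n) ℂ :=
  NormedSpace.exp ((-(Complex.I) * (γ : ℂ)) • hamC n G)

/-- The plus state `|+⟩ = 2^{-n/2} (1,…,1)ᵀ`. -/
def plusState (n : ℕ) : QIdx n → ℂ := fun _ => ((Real.sqrt 2 : ℂ))⁻¹ ^ n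

/-- The `m`-th layer `U_B(β_{m+1}) U_C(γ_{m+1})` of the QAOA circuit (`m` is 0-indexed);
`1` if `m` is out of range. -/
def qaoaLayer (n : ℕ) (G : SimpleGraph (Fin n)) [DecidableRel G.Adj] {p : ℕ}
    (β γ : Fin p → ℝ) (m : ℕ) : Matrix (QIdx n) (QIdx n) ℂ :=
  if h : m < p then uB n (β ⟨m, h⟩) * uC n G (γ ⟨m, h⟩) else 1

/-- The ordered product of the (0-indexed) layers `a, a+1, …, a+len-1` of the QAOA circuit, with
higher layers acting later (to the left). -/
def uProd (n : ℕ) (G : SimpleGraph (Fin n)) [DecidableRel G.Adj] {p : ℕ}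
    (β γ : Fin p → ℝ) (a len : ℕ) : Matrix (QIdx n) (QIdx n) ℂ :=
  (((List.range' a len).reverse).map (qaoaLayer n G β γ)).prod

/-- The depth-`p` QAOA state `|β,γ⟩ = U_B(β_p) U_C(γ_p) ⋯ U_B(β_1) U_C(γ_1) |+⟩`. -/
def qaoaState (n : ℕ) (G : SimpleGraph (Fin n)) [DecidableRel G.Adj] {p : ℕ}
    (β γ : Fin p → ℝ) : QIdx n → ℂ :=
  (uProd n G β γ 0 p).mulVec (plusState n)

/-- The depth-`p` QAOA cost function `E_p(β,γ) = ⟨β,γ| H_C |β,γ⟩` as a real-valued function on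
`ℝ^p × ℝ^p`. -/
def energyE (n : ℕ) (G : SimpleGraph (Fin n)) [DecidableRel G.Adj] (p : ℕ)
    (x : (Fin p → ℝ) × (Fin p → ℝ)) : ℝ :=
  (star (qaoaState n G x.1 x.2) ⬝ᵥ (hamC n G).mulVec (qaoaState n G x.1 x.2)).re

/-- The point `Γ^{p+1}(i,j)` obtained from `(β⋆,γ⋆) ∈ ℝ^p × ℝ^p` by inserting a `0` at
position `i` in the `β`-part and at position `j` in the `γ`-part. -/
def padded {p : ℕ} (x : (Fin p → ℝ) × (Fin p → ℝ)) (i j : Fin (p + 1)) :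
    (Fin (p + 1) → ℝ) × (Fin (p + 1) → ℝ) :=
  (i.insertNth 0 x.1, j.insertNth 0 x.2)

/-- The coordinate direction in `ℝ^p × ℝ^p` corresponding to `β_l` (`Sum.inl l`) or
`γ_l` (`Sum.inr l`). -/
def coordDir {p : ℕ} : Fin p ⊕ Fin p → (Fin p → ℝ) × (Fin p → ℝ) :=
  Sum.elim (fun l => (Pi.single l 1, 0)) (fun l => (0, Pi.single l 1))

/-- Partial derivative of a real function on `ℝ^p × ℝ^p` in the coordinate direction `a`. -/
def pderiv' {p : ℕ} (f : ((Fin p → ℝ) × (Fin p → ℝ)) → ℝ)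
    (a : Fin p ⊕ Fin p) (x : (Fin p → ℝ) × (Fin p → ℝ)) : ℝ :=
  fderiv ℝ f x (coordDir a)

/-- The Hessian matrix of a real function on `ℝ^p × ℝ^p`, with rows and columns indexed by the
coordinates `β_1,…,β_p` (`Sum.inl`) and `γ_1,…,γ_p` (`Sum.inr`). -/
def hessian {p : ℕ} (f : ((Fin p → ℝ) × (Fin p → ℝ)) → ℝ)
    (x : (Fin p → ℝ) × (Fin p → ℝ)) : Matrix (Fin p ⊕ Fin p) (Fin p ⊕ Fin p) ℝ :=
  Matrix.of fun a b => pderiv' (pderiv' f b) a x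

/-- The commutator `[A, B] = AB - BA`. -/
def commMat {n : ℕ} (A B : Matrix (QIdx n) (QIdx n) ℂ) : Matrix (QIdx n) (QIdx n) ℂ :=
  A * B - B * A

end

/-!
Inserting a zero angle turns one unitary of the new layer into the identity, and the other one
merges with its neighbour of the same kind, because `U_B(s) U_B(t) = U_B(s + t)` and likewise for
`U_C`. At the two ends nothing is left to merge with, but nothing is lost either: `U_B(b)` only
multiplies `|+⟩` by a phase, and a final `U_C(c)` is a unitary commuting with `H_C`. Hence on the
hyperplane `γ_i = 0` (resp. `β_k = 0`) the cost `E_{p+1}` factors through `E_p` by a linear map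
that adds up two adjacent `β`-angles (resp. `γ`-angles) or drops the one at the end. The point `Γ^{p+1}(k,i)` lies on both
hyperplanes, and for `i = k` or `i = k + 1` both maps send it to `(β⋆, γ⋆)`. By the chain rule the
derivative of `E_{p+1}` there vanishes on all `β`-directions and on all `γ`-directions.
-/

open NormedSpace

namespace Fin

variable {α : Type*} {n : ℕ}

lemma contractNth_zero (op : α → α → α) (g : Fin (n + 2) → α) :
    contractNth 0 op g = cons (op (g 0) (g 1)) (tail (tail g)) := by
  ext k
  cases k using Fin.cases with
  | zero => simp [contractNth]
  | succ k => simp [contractNth, tail]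

lemma contractNth_succ (j : Fin (n + 1)) (op : α → α → α) (g : Fin (n + 2) → α) :
    contractNth j.succ op g = cons (g 0) (contractNth j op (tail g)) := by
  ext k
  cases k using Fin.cases with
  | zero => simp [contractNth]
  | succ k => simp [contractNth, tail]

lemma contractNth_castSucc_insertNth_succ {op : α → α → α} {e : α} (h : ∀ x, op x e = x)
    (j : Fin n) (g : Fin n → α) : contractNth j.castSucc op (j.succ.insertNth e g) = g := by
  induction n with
  | zero => exact j.elim0
  | succ n ih =>
    cases g using Fin.consCases with
    | cons a g =>
      cases j using Fin.cases with
      | zero =>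
        rw [castSucc_zero, contractNth_zero, insertNth_succ_cons, insertNth_zero']
        simp [h]
      | succ j => simp [contractNth_succ, ih]

lemma contractNth_castSucc_insertNth_castSucc {op : α → α → α} {e : α} (h : ∀ x, op e x = x)
    (j : Fin n) (g : Fin n → α) : contractNth j.castSucc op (j.castSucc.insertNth e g) = g := by
  induction n with
  | zero => exact j.elim0
  | succ n ih =>
    cases g using Fin.consCases with
    | cons a g =>
      cases j using Fin.cases with
      | zero => simp [contractNth_zero, h]
      | succ j => simp [contractNth_succ, ih]

end Fin

section PartialDerivatives

variable {E F G H : Type*} [NormedAddCommGroup E] [NormedSpace ℝ E] [NormedAddCommGroup F]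
  [NormedSpace ℝ F] [NormedAddCommGroup G] [NormedSpace ℝ G] [NormedAddCommGroup H]
  [NormedSpace ℝ H] {f : E × F → H} {g : G → H} {x : E × F}

lemma fderiv_comp_inl_eq_zero {φ : E → G} (hf : DifferentiableAt ℝ f x)
    (hg : DifferentiableAt ℝ g (φ x.1)) (hφ : DifferentiableAt ℝ φ x.1)
    (hg₀ : fderiv ℝ g (φ x.1) = 0) (h : ∀ a, f (a, x.2) = g (φ a)) :
    (fderiv ℝ f x).comp (.inl ℝ E F) = 0 := by
  have hslice := hg.hasFDerivAt.comp x.1 hφ.hasFDerivAt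
  rw [hg₀, ContinuousLinearMap.zero_comp, Function.comp_def, ← funext h] at hslice
  exact (hf.hasFDerivAt.comp x.1 (hasFDerivAt_prodMk_left x.1 x.2)).unique hslice

lemma fderiv_comp_inr_eq_zero {ψ : F → G} (hf : DifferentiableAt ℝ f x)
    (hg : DifferentiableAt ℝ g (ψ x.2)) (hψ : DifferentiableAt ℝ ψ x.2)
    (hg₀ : fderiv ℝ g (ψ x.2) = 0) (h : ∀ b, f (x.1, b) = g (ψ b)) :
    (fderiv ℝ f x).comp (.inr ℝ E F) = 0 := by
  have hslice := hg.hasFDerivAt.comp x.2 hψ.hasFDerivAt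
  rw [hg₀, ContinuousLinearMap.zero_comp, Function.comp_def, ← funext h] at hslice
  exact (hf.hasFDerivAt.comp x.2 (hasFDerivAt_prodMk_right x.1 x.2)).unique hslice

end PartialDerivatives

section QuadraticForm

variable {m : Type*} [Fintype m]

def mulVecLeft (v : m → ℂ) : Matrix m m ℂ →ₗ[ℂ] m → ℂ where
  toFun A := A *ᵥ v
  map_add' A B := add_mulVec A B v
  map_smul' c A := smul_mulVec c A v

open scoped Norms.Operator in
lemma exp_mulVec_of_mulVec_eq_smul [DecidableEq m] {A : Matrix m m ℂ} {v : m → ℂ} {μ : ℂ}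
    (h : A *ᵥ v = μ • v) : NormedSpace.exp A *ᵥ v = Complex.exp μ • v := by
  have hpow (k : ℕ) : (A ^ k) *ᵥ v = μ ^ k • v := by
    induction k with
    | zero => simp
    | succ k ih => rw [pow_succ, ← mulVec_mulVec, h, mulVec_smul, ih, smul_smul, pow_succ']
  have hA := (NormedSpace.exp_series_hasSum_exp' (𝕂 := ℂ) A).mapL
    (LinearMap.toContinuousLinearMap (mulVecLeft v))
  have hμ := (NormedSpace.exp_series_hasSum_exp' (𝕂 := ℂ) μ).smul_const v
  simp only [LinearMap.coe_toContinuousLinearMap', mulVecLeft, LinearMap.coe_mk, AddHom.coe_mk,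
    smul_mulVec, hpow, smul_smul] at hA hμ
  exact hA.unique (by simpa [Complex.exp_eq_exp_ℂ] using hμ)

lemma star_smul_dotProduct_mulVec_smul (H : Matrix m m ℂ) (v : m → ℂ) {e : ℂ} (he : ‖e‖ = 1) :
    star (e • v) ⬝ᵥ H *ᵥ (e • v) = star v ⬝ᵥ H *ᵥ v := by
  rw [star_smul, mulVec_smul, smul_dotProduct, dotProduct_smul, smul_smul, smul_eq_mul,
    RCLike.star_def, RCLike.conj_mul, he]
  simp

lemma star_mulVec_dotProduct_mulVec_mulVec [DecidableEq m] {U H : Matrix m m ℂ}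
    (hU : U ∈ unitary (Matrix m m ℂ)) (hUH : Commute U H) (v : m → ℂ) :
    star (U *ᵥ v) ⬝ᵥ H *ᵥ (U *ᵥ v) = star v ⬝ᵥ H *ᵥ v := by
  rw [star_mulVec, ← dotProduct_mulVec, mulVec_mulVec, mulVec_mulVec, ← star_eq_conjTranspose,
    mul_assoc, ← hUH.eq, ← mul_assoc, Unitary.star_mul_self_of_mem hU, one_mul]

end QuadraticForm

section Hamiltonians

variable {n : ℕ}

lemma sum_pauliAt_apply (M : Matrix (Fin 2) (Fin 2) ℂ) (i : Fin n) (s : QIdx n) :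
    ∑ t, pauliAt M i s t = ∑ b, M (s i) b := by
  simp only [pauliAt, of_apply]
  rw [← Fintype.prod_sum (fun j b => if j = i then M (s j) b else if s j = b then 1 else 0),
    Finset.prod_eq_single i (fun j _ hj => by simp [hj]) (by simp)]
  simp

lemma sigmaX_mulVec_plusState (i : Fin n) : sigmaX i *ᵥ plusState n = plusState n := by
  ext s
  have hrow : ∑ b, pauliX (s i) b = 1 := by
    generalize s i = a
    fin_cases a <;> simp [pauliX]
  simp [mulVec, dotProduct, plusState, ← Finset.sum_mul, sigmaX, sum_pauliAt_apply, hrow]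

lemma hamB_mulVec_plusState : hamB n *ᵥ plusState n = (-n : ℂ) • plusState n := by
  ext s
  simp [hamB, neg_mulVec, sum_mulVec, sigmaX_mulVec_plusState]

lemma isSelfAdjoint_sigmaZ (i : Fin n) : IsSelfAdjoint (sigmaZ i) := by
  have hreal (a : Fin 2) : star (pauliZ a a) = pauliZ a a := by fin_cases a <;> simp [pauliZ]
  rw [sigmaZ_eq_diagonal, IsSelfAdjoint, star_eq_conjTranspose, diagonal_conjTranspose]
  exact congrArg diagonal (funext fun s => hreal (s i))

lemma isSelfAdjoint_hamC (G : SimpleGraph (Fin n)) [DecidableRel G.Adj] :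
    IsSelfAdjoint (hamC n G) := by
  refine isSelfAdjoint_sum _ fun e _ => ?_
  induction e using Sym2.ind with
  | _ i j =>
    exact ((isSelfAdjoint_sigmaZ i).commute_iff (isSelfAdjoint_sigmaZ j)).mp (sigmaZ_mul_comm i j)

end Hamiltonians

section Unitaries

variable {n : ℕ} (G : SimpleGraph (Fin n)) [DecidableRel G.Adj]

lemma Matrix.exp_add_smul {m : Type*} [Fintype m] [DecidableEq m] (A : Matrix m m ℂ) (s t : ℝ) :
    exp ((s + t) • A) = exp (s • A) * exp (t • A) := by
  rw [add_smul, Matrix.exp_add_of_commute]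
  exact ((Commute.refl A).smul_left s).smul_right t

lemma uB_eq_exp_smul (b : ℝ) : uB n b = exp (b • (-I • hamB n)) := by
  rw [uB, ← Complex.coe_smul, smul_smul, mul_comm]

lemma uC_eq_exp_smul (c : ℝ) : uC n G c = exp (c • (-I • hamC n G)) := by
  rw [uC, ← Complex.coe_smul, smul_smul, mul_comm]

lemma uB_add (s t : ℝ) : uB n (s + t) = uB n s * uB n t := by
  simp only [uB_eq_exp_smul, Matrix.exp_add_smul]

lemma uC_add (s t : ℝ) : uC n G (s + t) = uC n G s * uC n G t := by
  simp only [uC_eq_exp_smul, Matrix.exp_add_smul]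

@[simp] lemma uB_zero : uB n 0 = 1 := by simp [uB]

@[simp] lemma uC_zero : uC n G 0 = 1 := by simp [uC]

lemma uB_mulVec_plusState (b : ℝ) :
    uB n b *ᵥ plusState n = Complex.exp (b * n * I) • plusState n := by
  rw [uB, exp_mulVec_of_mulVec_eq_smul (μ := b * n * I)]
  rw [smul_mulVec, hamB_mulVec_plusState, smul_smul]
  ring_nf

lemma star_uC (c : ℝ) : star (uC n G c) = uC n G (-c) := by
  rw [uC, uC, star_eq_conjTranspose, ← Matrix.exp_conjTranspose, conjTranspose_smul,
    ← star_eq_conjTranspose, (isSelfAdjoint_hamC G).star_eq]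
  congr 2
  simp

lemma uC_mem_unitary (c : ℝ) : uC n G c ∈ unitary (Matrix (QIdx n) (QIdx n) ℂ) := by
  rw [Unitary.mem_iff, star_uC, ← uC_add, ← uC_add, neg_add_cancel, add_neg_cancel, uC_zero]
  exact ⟨rfl, rfl⟩

lemma commute_uC_hamC (c : ℝ) : Commute (uC n G c) (hamC n G) :=
  ((Commute.refl _).smul_left _).exp_left

end Unitaries

section Circuit

variable {n : ℕ} {G : SimpleGraph (Fin n)} [DecidableRel G.Adj] {p : ℕ}

lemma qaoaLayer_succ (β γ : Fin (p + 1) → ℝ) (m : ℕ) :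
    qaoaLayer n G β γ (m + 1) = qaoaLayer n G (Fin.tail β) (Fin.tail γ) m := by
  by_cases hm : m < p
  · simp [qaoaLayer, hm, Fin.tail]
  · simp [qaoaLayer, hm]

lemma uProd_zero_succ (β γ : Fin (p + 1) → ℝ) :
    uProd n G β γ 0 (p + 1) =
      uProd n G (Fin.tail β) (Fin.tail γ) 0 p * (uB n (β 0) * uC n G (γ 0)) := by
  have hshift : List.range' (0 + 1) p = (List.range' 0 p).map (· + 1) := by
    simp only [add_comm _ 1, List.map_add_range']
  rw [uProd, uProd, List.range'_succ, hshift, List.reverse_cons, List.map_append, List.prod_append,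
    List.map_reverse, List.map_map, Function.comp_def]
  simp only [qaoaLayer_succ, ← List.map_reverse]
  congr 1
  simp [qaoaLayer]

lemma uProd_cons_zero_snd (b : ℝ) (β γ : Fin p → ℝ) :
    uProd n G (Fin.cons b β) (Fin.cons 0 γ) 0 (p + 1) = uProd n G β γ 0 p * uB n b := by
  simp [uProd_zero_succ]

lemma uProd_snoc (b c : ℝ) (β γ : Fin p → ℝ) :
    uProd n G (Fin.snoc β b) (Fin.snoc γ c) 0 (p + 1) = uB n b * uC n G c * uProd n G β γ 0 p := by
  induction p with
  | zero => simp [Fin.snoc_zero, uProd, qaoaLayer]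
  | succ p ih =>
    obtain ⟨b₀, β, rfl⟩ : ∃ b₀ β', β = Fin.cons b₀ β' := ⟨_, _, (Fin.cons_self_tail β).symm⟩
    obtain ⟨c₀, γ, rfl⟩ : ∃ c₀ γ', γ = Fin.cons c₀ γ' := ⟨_, _, (Fin.cons_self_tail γ).symm⟩
    simp [← Fin.cons_snoc_eq_snoc_cons, uProd_zero_succ, ih, mul_assoc]

lemma uProd_insertNth_zero_snd (j : Fin p) (a : Fin (p + 1) → ℝ) (γ : Fin p → ℝ) :
    uProd n G a (j.succ.insertNth 0 γ) 0 (p + 1) =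
      uProd n G (j.castSucc.contractNth (· + ·) a) γ 0 p := by
  induction p with
  | zero => exact j.elim0
  | succ p ih =>
    cases γ using Fin.consCases with
    | cons c γ =>
      cases j using Fin.cases with
      | zero =>
        rw [Fin.castSucc_zero, Fin.contractNth_zero, Fin.insertNth_succ_cons, Fin.insertNth_zero',
          uProd_zero_succ, uProd_zero_succ, uProd_zero_succ]
        simp [Fin.tail, mul_assoc, add_comm (a 0), uB_add]
      | succ j =>
        rw [Fin.insertNth_succ_cons, ← Fin.succ_castSucc, Fin.contractNth_succ, uProd_zero_succ a,
          uProd_zero_succ (Fin.cons _ _)]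
        simp [ih]

lemma uProd_insertNth_zero_fst (j : Fin p) (β : Fin p → ℝ) (c : Fin (p + 1) → ℝ) :
    uProd n G (j.castSucc.insertNth 0 β) c 0 (p + 1) =
      uProd n G β (j.castSucc.contractNth (· + ·) c) 0 p := by
  induction p with
  | zero => exact j.elim0
  | succ p ih =>
    cases β using Fin.consCases with
    | cons b β =>
      cases j using Fin.cases with
      | zero =>
        rw [Fin.castSucc_zero, Fin.contractNth_zero, Fin.insertNth_zero',
          uProd_zero_succ, uProd_zero_succ, uProd_zero_succ]
        simp [Fin.tail, mul_assoc, add_comm (c 0), uC_add G]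
      | succ j =>
        rw [← Fin.succ_castSucc, Fin.insertNth_succ_cons, Fin.contractNth_succ,
          uProd_zero_succ (Fin.cons _ _), uProd_zero_succ (Fin.cons _ _)]
        simp [ih]

end Circuit

section Differentiability

open scoped Norms.Operator

variable {n : ℕ} (G : SimpleGraph (Fin n)) [DecidableRel G.Adj]

lemma differentiable_exp_smul {m : Type*} [Fintype m] [DecidableEq m] (A : Matrix m m ℂ) :
    Differentiable ℝ fun t : ℝ => exp (t • A) :=
  fun t => (hasDerivAt_exp_smul_const A t).differentiableAt

lemma differentiable_uB : Differentiable ℝ (uB n) := by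
  simpa only [← uB_eq_exp_smul] using differentiable_exp_smul (-I • hamB n)

lemma differentiable_uC : Differentiable ℝ (uC n G) := by
  simpa only [← uC_eq_exp_smul] using differentiable_exp_smul (-I • hamC n G)

lemma differentiable_uProd (p : ℕ) :
    Differentiable ℝ fun x : (Fin p → ℝ) × (Fin p → ℝ) => uProd n G x.1 x.2 0 p := by
  induction p with
  | zero => exact differentiable_const 1
  | succ p ih =>
    simp only [uProd_zero_succ]
    have htail : Differentiable ℝ fun x : (Fin (p + 1) → ℝ) × (Fin (p + 1) → ℝ) =>
        (Fin.tail x.1, Fin.tail x.2) := by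
      unfold Fin.tail
      fun_prop
    refine (ih.comp htail).mul ((differentiable_uB.comp ?_).mul ((differentiable_uC G).comp ?_)) <;>
      fun_prop

lemma differentiable_qaoaState (p : ℕ) :
    Differentiable ℝ fun x : (Fin p → ℝ) × (Fin p → ℝ) => qaoaState n G x.1 x.2 :=
  (LinearMap.toContinuousLinearMap ((mulVecLeft (plusState n)).restrictScalars ℝ)).differentiable.comp
    (differentiable_uProd G p)

lemma differentiable_energyE (p : ℕ) : Differentiable ℝ (energyE n G p) := by
  have hψ := differentiable_pi.mp (differentiable_qaoaState G p)
  unfold energyE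
  simp only [dotProduct, mulVec, Pi.star_apply]
  fun_prop

end Differentiability

section ZeroAngles

variable {n : ℕ} {G : SimpleGraph (Fin n)} [DecidableRel G.Adj] {p : ℕ}

lemma energyE_cons_zero_snd (b : ℝ) (β γ : Fin p → ℝ) :
    energyE n G (p + 1) (Fin.cons b β, Fin.cons 0 γ) = energyE n G p (β, γ) := by
  have hphase : ‖Complex.exp (b * n * I)‖ = 1 := by simp [Complex.norm_exp]
  simp only [energyE, qaoaState, uProd_cons_zero_snd, ← mulVec_mulVec, uB_mulVec_plusState]
  rw [mulVec_smul, star_smul_dotProduct_mulVec_smul _ _ hphase]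

lemma energyE_snoc_zero_fst (c : ℝ) (β γ : Fin p → ℝ) :
    energyE n G (p + 1) (Fin.snoc β 0, Fin.snoc γ c) = energyE n G p (β, γ) := by
  simp only [energyE, qaoaState, uProd_snoc, uB_zero, one_mul, ← mulVec_mulVec,
    star_mulVec_dotProduct_mulVec_mulVec (uC_mem_unitary G c) (commute_uC_hamC G c)]

/-- The `β`-angles of a depth-`p` circuit equivalent to a depth-`(p+1)` circuit with `γ_i = 0`:
`β_i` is added to `β_{i-1}`, or dropped if `i = 0`. -/
def absorbBeta (i : Fin (p + 1)) (a : Fin (p + 1) → ℝ) : Fin p → ℝ :=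
  Fin.cases (Fin.tail a) (fun j => j.castSucc.contractNth (· + ·) a) i

/-- The `γ`-angles of a depth-`p` circuit equivalent to a depth-`(p+1)` circuit with `β_k = 0`:
`γ_k` is added to `γ_{k+1}`, or dropped if `k = p`. -/
def absorbGamma (k : Fin (p + 1)) (c : Fin (p + 1) → ℝ) : Fin p → ℝ :=
  Fin.lastCases (Fin.init c) (fun j => j.castSucc.contractNth (· + ·) c) k

lemma absorbBeta_zero : absorbBeta (0 : Fin (p + 1)) = Fin.tail :=
  funext fun _ => Fin.cases_zero ..

lemma absorbBeta_succ (j : Fin p) : absorbBeta j.succ = j.castSucc.contractNth (· + ·) :=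
  funext fun _ => Fin.cases_succ ..

lemma absorbGamma_last : absorbGamma (Fin.last p) = Fin.init :=
  funext fun _ => Fin.lastCases_last ..

lemma absorbGamma_castSucc (j : Fin p) : absorbGamma j.castSucc = j.castSucc.contractNth (· + ·) :=
  funext fun _ => Fin.lastCases_castSucc ..

lemma energyE_insertNth_zero_snd (i : Fin (p + 1)) (a : Fin (p + 1) → ℝ) (γ : Fin p → ℝ) :
    energyE n G (p + 1) (a, i.insertNth 0 γ) = energyE n G p (absorbBeta i a, γ) := by
  cases i using Fin.cases with
  | zero =>
    rw [← Fin.cons_self_tail a, Fin.insertNth_zero', energyE_cons_zero_snd, absorbBeta_zero,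
      Fin.tail_cons]
  | succ j => simp [energyE, qaoaState, absorbBeta_succ, uProd_insertNth_zero_snd]

lemma energyE_insertNth_zero_fst (k : Fin (p + 1)) (β : Fin p → ℝ) (c : Fin (p + 1) → ℝ) :
    energyE n G (p + 1) (k.insertNth 0 β, c) = energyE n G p (β, absorbGamma k c) := by
  cases k using Fin.lastCases with
  | last =>
    rw [← Fin.snoc_init_self c, Fin.insertNth_last', energyE_snoc_zero_fst, absorbGamma_last,
      Fin.init_snoc]
  | cast j => simp [energyE, qaoaState, absorbGamma_castSucc, uProd_insertNth_zero_fst]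

lemma absorbBeta_insertNth_self (i : Fin (p + 1)) (β : Fin p → ℝ) :
    absorbBeta i (i.insertNth 0 β) = β := by
  cases i using Fin.cases with
  | zero => rw [absorbBeta_zero, Fin.insertNth_zero', Fin.tail_cons]
  | succ j => rw [absorbBeta_succ, Fin.contractNth_castSucc_insertNth_succ add_zero]

lemma absorbBeta_succ_insertNth_castSucc (i : Fin p) (β : Fin p → ℝ) :
    absorbBeta i.succ (i.castSucc.insertNth 0 β) = β := by
  rw [absorbBeta_succ, Fin.contractNth_castSucc_insertNth_castSucc zero_add]

lemma absorbGamma_insertNth_self (k : Fin (p + 1)) (γ : Fin p → ℝ) :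
    absorbGamma k (k.insertNth 0 γ) = γ := by
  cases k using Fin.lastCases with
  | last => rw [absorbGamma_last, Fin.insertNth_last', Fin.init_snoc]
  | cast j => rw [absorbGamma_castSucc, Fin.contractNth_castSucc_insertNth_castSucc zero_add]

lemma absorbGamma_castSucc_insertNth_succ (i : Fin p) (γ : Fin p → ℝ) :
    absorbGamma i.castSucc (i.succ.insertNth 0 γ) = γ := by
  rw [absorbGamma_castSucc, Fin.contractNth_castSucc_insertNth_succ add_zero]

lemma differentiable_contractNth_add (j : Fin (p + 1)) :
    Differentiable ℝ fun a : Fin (p + 1) → ℝ => j.contractNth (· + ·) a := by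
  refine differentiable_pi.mpr fun k => ?_
  unfold Fin.contractNth
  split_ifs <;> fun_prop

lemma differentiable_absorbBeta (i : Fin (p + 1)) : Differentiable ℝ (absorbBeta i) := by
  cases i using Fin.cases with
  | zero =>
    rw [absorbBeta_zero]
    unfold Fin.tail
    fun_prop
  | succ j =>
    rw [absorbBeta_succ]
    exact differentiable_contractNth_add j.castSucc

lemma differentiable_absorbGamma (k : Fin (p + 1)) : Differentiable ℝ (absorbGamma k) := by
  cases k using Fin.lastCases with
  | last =>
    rw [absorbGamma_last]
    unfold Fin.init
    fun_prop
  | cast j =>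
    rw [absorbGamma_castSucc]
    exact differentiable_contractNth_add j.castSucc

end ZeroAngles


theorem fderiv_energyE_padded_eq_zero {n p : ℕ} (G : SimpleGraph (Fin n)) [DecidableRel G.Adj]
    {β γ : Fin p → ℝ} (hcrit : fderiv ℝ (energyE n G p) (β, γ) = 0) {k i : Fin (p + 1)}
    (hβ : absorbBeta i (k.insertNth 0 β) = β) (hγ : absorbGamma k (i.insertNth 0 γ) = γ) :
    fderiv ℝ (energyE n G (p + 1)) (padded (β, γ) k i) = 0 := by
  refine ContinuousLinearMap.prod_ext ?_ ?_
  · rw [ContinuousLinearMap.zero_comp]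
    exact fderiv_comp_inl_eq_zero (φ := fun a => (absorbBeta i a, γ))
      (differentiable_energyE G _ _) (differentiable_energyE G _ _)
      ((differentiable_absorbBeta i).prodMk (differentiable_const γ) _) (by simpa [padded, hβ])
      fun a => energyE_insertNth_zero_snd i a γ
  · rw [ContinuousLinearMap.zero_comp]
    exact fderiv_comp_inr_eq_zero (ψ := fun c => (β, absorbGamma k c))
      (differentiable_energyE G _ _) (differentiable_energyE G _ _)
      ((differentiable_const β).prodMk (differentiable_absorbGamma k) _) (by simpa [padded, hγ])
      fun c => energyE_insertNth_zero_fst k β c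

theorem stmt5_general (n : ℕ) (G : SimpleGraph (Fin n)) [DecidableRel G.Adj]
    (p : ℕ) (β γ : Fin p → ℝ)
    (hcrit : fderiv ℝ (energyE n G p) (β, γ) = 0) :
    (∀ i : Fin (p + 1), fderiv ℝ (energyE n G (p + 1)) (padded (β, γ) i i) = 0) ∧
    (∀ i : Fin p, fderiv ℝ (energyE n G (p + 1)) (padded (β, γ) i.castSucc i.succ) = 0) :=
  ⟨fun i => fderiv_energyE_padded_eq_zero G hcrit (absorbBeta_insertNth_self i β)
      (absorbGamma_insertNth_self i γ),
    fun i => fderiv_energyE_padded_eq_zero G hcrit (absorbBeta_succ_insertNth_castSucc i β)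
      (absorbGamma_castSucc_insertNth_succ i γ)⟩

/-- stationarity of the padded points. -/
theorem stmt5 (n : ℕ) (hn : 1 ≤ n) (G : SimpleGraph (Fin n)) [DecidableRel G.Adj]
    (p : ℕ) (hp : 1 ≤ p) (β γ : Fin p → ℝ)
    (hcrit : fderiv ℝ (energyE n G p) (β, γ) = 0) :
    (∀ i : Fin (p + 1), fderiv ℝ (energyE n G (p + 1)) (padded (β, γ) i i) = 0) ∧
    (∀ i : Fin p, fderiv ℝ (energyE n G (p + 1)) (padded (β, γ) i.castSucc i.succ) = 0) :=
  stmt5_general n G p β γ hcrit
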